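/- arXiv:2408.06887 — 3 statements merged into one kernel-verified Lean document; each statement's English description precedes it below -/
import Mathlib

section
/- Let H = H_A ⊗ 1_B + H_AB + 1_A ⊗ H_B be a self-adjoint operator on the tensor product H_A ⊗ H_B of two finite-dimensional Hilbert spaces, where Tr_A(H_AB) = 0 and Tr_B(H_AB) = 0. Suppose ρ̄ = ρ_A ⊗ ρ_B is a positive definite density matrix of product form that commutes with H. Then [ρ_A, H_A] = 0, [ρ_B, H_B] = 0, and [ρ̄, H_AB] = 0. -/
open Matrix Kronecker BigOperators
open scoped ComplexOrder

/-- Partial trace over the second (B) factor. -/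
noncomputable def ptraceB {A B : Type*} [Fintype B] (M : Matrix (A × B) (A × B) ℂ) : Matrix A A ℂ :=
  fun i j => ∑ b, M (i, b) (j, b)

/-- Partial trace over the first (A) factor. -/
noncomputable def ptraceA {A B : Type*} [Fintype A] (M : Matrix (A × B) (A × B) ℂ) : Matrix B B ℂ :=
  fun i j => ∑ a, M (a, i) (a, j)

/-!
Writing `ρ_A ⊗ ρ_B = (ρ_A ⊗ 1)(1 ⊗ ρ_B)`, the relation `[ρ_A ⊗ ρ_B, H] = 0` conjugated by the
invertible `1 ⊗ ρ_B` and traced over `B` gives `ρ_A Tr_B H = (Tr_B H) ρ_A`, because `Tr_B` is cyclic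
in operators of the form `1 ⊗ Y`. Since `Tr_B H_AB = 0`, `Tr_B H = |B| H_A + Tr(H_B) 1`, so `ρ_A`
commutes with `H_A`; swapping the factors gives `[ρ_B, H_B] = 0`. Then `ρ_A ⊗ ρ_B` commutes with
`H_A ⊗ 1` and `1 ⊗ H_B`, hence with `H_AB`.
-/

lemma Matrix.nonempty_of_trace_ne_zero {n R : Type*} [Fintype n] [AddCommMonoid R]
    {M : Matrix n n R} (h : M.trace ≠ 0) : Nonempty n := by
  by_contra hn
  rw [not_nonempty_iff] at hn
  exact h (Fintype.sum_empty _)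

lemma Commute.kronecker {l m R : Type*} [Fintype l] [Fintype m] [CommSemiring R]
    {a b : Matrix l l R} {c d : Matrix m m R} (hab : Commute a b) (hcd : Commute c d) :
    Commute (a ⊗ₖ c) (b ⊗ₖ d) := by
  rw [Commute, SemiconjBy, ← mul_kronecker_mul, ← mul_kronecker_mul, hab.eq, hcd.eq]

lemma Matrix.reindex_prodComm_kronecker {l m n p R : Type*} [CommSemiring R]
    (X : Matrix l m R) (Y : Matrix n p R) :
    reindex (Equiv.prodComm l n) (Equiv.prodComm m p) (X ⊗ₖ Y) = Y ⊗ₖ X := by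
  ext ⟨i, j⟩ ⟨k, l⟩
  simp [mul_comm]

section PartialTrace

variable {A B : Type*}

lemma ptraceB_reindex_prodComm [Fintype A] (M : Matrix (A × B) (A × B) ℂ) :
    ptraceB (reindex (Equiv.prodComm A B) (Equiv.prodComm A B) M) = ptraceA M :=
  rfl

@[simp]
lemma ptraceB_add [Fintype B] (M N : Matrix (A × B) (A × B) ℂ) :
    ptraceB (M + N) = ptraceB M + ptraceB N := by
  ext i j
  simp [ptraceB, Finset.sum_add_distrib]

@[simp]
lemma ptraceB_kronecker [Fintype B] (X : Matrix A A ℂ) (Y : Matrix B B ℂ) :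
    ptraceB (X ⊗ₖ Y) = Y.trace • X := by
  ext i j
  simp [ptraceB, Matrix.trace, Finset.mul_sum, mul_comm]

lemma ptraceB_kronecker_one_mul [Fintype A] [Fintype B] [DecidableEq B] (X : Matrix A A ℂ)
    (M : Matrix (A × B) (A × B) ℂ) :
    ptraceB ((X ⊗ₖ (1 : Matrix B B ℂ)) * M) = X * ptraceB M := by
  ext i j
  simp only [ptraceB, mul_apply, Fintype.sum_prod_type, kronecker_apply, one_apply, mul_ite,
    mul_one, mul_zero, ite_mul, zero_mul, Finset.sum_ite_eq, Finset.mem_univ, if_true,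
    Finset.mul_sum]
  rw [Finset.sum_comm]

lemma ptraceB_mul_kronecker_one [Fintype A] [Fintype B] [DecidableEq B] (X : Matrix A A ℂ)
    (M : Matrix (A × B) (A × B) ℂ) :
    ptraceB (M * (X ⊗ₖ (1 : Matrix B B ℂ))) = ptraceB M * X := by
  ext i j
  simp only [ptraceB, mul_apply, Fintype.sum_prod_type, kronecker_apply, one_apply, mul_ite,
    mul_one, mul_zero, Finset.sum_ite_eq', Finset.mem_univ, if_true, Finset.sum_mul]
  rw [Finset.sum_comm]

lemma ptraceB_one_kronecker_mul_comm [Fintype A] [Fintype B] [DecidableEq A]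
    (Y : Matrix B B ℂ) (M : Matrix (A × B) (A × B) ℂ) :
    ptraceB (((1 : Matrix A A ℂ) ⊗ₖ Y) * M) = ptraceB (M * ((1 : Matrix A A ℂ) ⊗ₖ Y)) := by
  ext i j
  simp only [ptraceB, mul_apply, kroneckerMap_apply, one_apply, ite_mul, one_mul, zero_mul,
    mul_ite, mul_zero, Fintype.sum_prod_type, Finset.sum_ite_irrel, Finset.sum_const_zero,
    Finset.sum_ite_eq, Finset.sum_ite_eq', Finset.mem_univ, if_true]
  rw [Finset.sum_comm]
  exact Finset.sum_congr rfl fun _ _ => Finset.sum_congr rfl fun _ _ => mul_comm _ _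

theorem commute_ptraceB_of_commute_kronecker [Fintype A] [Fintype B] [DecidableEq A]
    [DecidableEq B] {ρA : Matrix A A ℂ} {ρB : Matrix B B ℂ} {H : Matrix (A × B) (A × B) ℂ}
    (hρB : IsUnit ρB) (h : Commute (ρA ⊗ₖ ρB) H) : Commute ρA (ptraceB H) := by
  obtain ⟨u, rfl⟩ := hρB
  have hsplit :
      ρA ⊗ₖ (u : Matrix B B ℂ) = (ρA ⊗ₖ (1 : Matrix B B ℂ)) * ((1 : Matrix A A ℂ) ⊗ₖ u) := by
    rw [← mul_kronecker_mul, Matrix.mul_one, Matrix.one_mul]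
  have hcancel :
      (ρA ⊗ₖ (u : Matrix B B ℂ)) * ((1 : Matrix A A ℂ) ⊗ₖ ↑u⁻¹) = ρA ⊗ₖ (1 : Matrix B B ℂ) := by
    rw [← mul_kronecker_mul, Matrix.mul_one, u.mul_inv]
  calc ρA * ptraceB H
      = ρA * ptraceB (((1 : Matrix A A ℂ) ⊗ₖ ↑u) * (H * ((1 : Matrix A A ℂ) ⊗ₖ ↑u⁻¹))) := by
        rw [ptraceB_one_kronecker_mul_comm, Matrix.mul_assoc, ← mul_kronecker_mul, u.inv_mul,
          Matrix.mul_one, one_kronecker_one, Matrix.mul_one]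
    _ = ptraceB ((ρA ⊗ₖ ↑u) * H * ((1 : Matrix A A ℂ) ⊗ₖ ↑u⁻¹)) := by
        rw [← ptraceB_kronecker_one_mul, hsplit]
        simp only [Matrix.mul_assoc]
    _ = ptraceB (H * (ρA ⊗ₖ (1 : Matrix B B ℂ))) := by
        rw [h.eq, Matrix.mul_assoc, hcancel]
    _ = ptraceB H * ρA := ptraceB_mul_kronecker_one _ _

theorem commute_of_commute_kronecker_of_ptraceB_eq_zero [Fintype A] [Fintype B]
    [DecidableEq A] [DecidableEq B] [Nonempty B] {ρA HA : Matrix A A ℂ} {ρB HB : Matrix B B ℂ}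
    {HAB : Matrix (A × B) (A × B) ℂ} (hρB : IsUnit ρB) (hHAB : ptraceB HAB = 0)
    (h : Commute (ρA ⊗ₖ ρB) (HA ⊗ₖ (1 : Matrix B B ℂ) + HAB + (1 : Matrix A A ℂ) ⊗ₖ HB)) :
    Commute ρA HA := by
  have hptrace := commute_ptraceB_of_commute_kronecker hρB h
  simp only [ptraceB_add, ptraceB_kronecker, hHAB, add_zero, trace_one] at hptrace
  have hcard : (Fintype.card B : ℂ) ≠ 0 := Nat.cast_ne_zero.mpr Fintype.card_ne_zero
  rw [← Commute.smul_right_iff₀ hcard]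
  simpa using hptrace.sub_right ((Commute.one_right ρA).smul_right HB.trace)

theorem commute_of_commute_kronecker_of_ptraceA_eq_zero [Fintype A] [Fintype B]
    [DecidableEq A] [DecidableEq B] [Nonempty A] {ρA HA : Matrix A A ℂ} {ρB HB : Matrix B B ℂ}
    {HAB : Matrix (A × B) (A × B) ℂ} (hρA : IsUnit ρA) (hHAB : ptraceA HAB = 0)
    (h : Commute (ρA ⊗ₖ ρB) (HA ⊗ₖ (1 : Matrix B B ℂ) + HAB + (1 : Matrix A A ℂ) ⊗ₖ HB)) :
    Commute ρB HB := by
  have hswap := h.map (reindexAlgEquiv ℂ ℂ (Equiv.prodComm A B))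
  simp only [map_add, coe_reindexAlgEquiv, reindex_prodComm_kronecker] at hswap
  rw [add_comm _ (HB ⊗ₖ (1 : Matrix A A ℂ)), add_comm ((1 : Matrix B B ℂ) ⊗ₖ HA), ← add_assoc]
    at hswap
  exact commute_of_commute_kronecker_of_ptraceB_eq_zero hρA
    ((ptraceB_reindex_prodComm HAB).trans hHAB) hswap

end PartialTrace

theorem stmt_1_general {A B : Type*} [Fintype A] [Fintype B] [DecidableEq A] [DecidableEq B]
    (HA : Matrix A A ℂ) (HB : Matrix B B ℂ) (HAB : Matrix (A × B) (A × B) ℂ)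
    (htrA : ptraceA HAB = 0) (htrB : ptraceB HAB = 0)
    (ρA : Matrix A A ℂ) (ρB : Matrix B B ℂ)
    (hρA : ρA.PosDef) (hρAtr : ρA.trace = 1)
    (hρB : ρB.PosDef) (hρBtr : ρB.trace = 1)
    (H : Matrix (A × B) (A × B) ℂ)
    (hH : H = HA ⊗ₖ (1 : Matrix B B ℂ) + HAB + (1 : Matrix A A ℂ) ⊗ₖ HB)
    (hcomm : (ρA ⊗ₖ ρB) * H = H * (ρA ⊗ₖ ρB)) :
    ρA * HA = HA * ρA ∧ ρB * HB = HB * ρB ∧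
      (ρA ⊗ₖ ρB) * HAB = HAB * (ρA ⊗ₖ ρB) := by
  subst hH
  have : Nonempty A := nonempty_of_trace_ne_zero (hρAtr ▸ one_ne_zero)
  have : Nonempty B := nonempty_of_trace_ne_zero (hρBtr ▸ one_ne_zero)
  have hA : Commute ρA HA :=
    commute_of_commute_kronecker_of_ptraceB_eq_zero hρB.isUnit htrB hcomm
  have hB : Commute ρB HB :=
    commute_of_commute_kronecker_of_ptraceA_eq_zero hρA.isUnit htrA hcomm
  refine ⟨hA, hB, ?_⟩
  have hAB := Commute.sub_right (Commute.sub_right hcomm ((Commute.one_right ρA).kronecker hB))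
    (hA.kronecker (Commute.one_right ρB))
  rwa [add_sub_cancel_right, add_sub_cancel_left] at hAB

theorem stmt_1 {A B : Type*} [Fintype A] [Fintype B] [DecidableEq A] [DecidableEq B]
    (HA : Matrix A A ℂ) (HB : Matrix B B ℂ) (HAB : Matrix (A × B) (A × B) ℂ)
    (hHA : HA.IsHermitian) (hHB : HB.IsHermitian) (hHAB : HAB.IsHermitian)
    (htrA : ptraceA HAB = 0) (htrB : ptraceB HAB = 0)
    (ρA : Matrix A A ℂ) (ρB : Matrix B B ℂ)
    (hρA : ρA.PosDef) (hρAtr : ρA.trace = 1)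
    (hρB : ρB.PosDef) (hρBtr : ρB.trace = 1)
    (H : Matrix (A × B) (A × B) ℂ)
    (hH : H = HA ⊗ₖ (1 : Matrix B B ℂ) + HAB + (1 : Matrix A A ℂ) ⊗ₖ HB)
    (hcomm : (ρA ⊗ₖ ρB) * H = H * (ρA ⊗ₖ ρB)) :
    ρA * HA = HA * ρA ∧ ρB * HB = HB * ρB ∧
      (ρA ⊗ₖ ρB) * HAB = HAB * (ρA ⊗ₖ ρB) :=
  stmt_1_general HA HB HAB htrA htrB ρA ρB hρA hρAtr hρB hρBtr H hH hcomm
end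

section
/- Consider the XX chain Hamiltonian H = Σ_{j=1}^{ℓ−1} (a_j† a_{j+1} + a_{j+1}† a_j) on (ℂ²)^{⊗ℓ}, ℓ ≥ 2, where a_j acts as a = |0⟩⟨1| on site j and identity elsewhere. If X is a traceless self-adjoint operator on the last ℓ−1 sites (sites 2 through ℓ) with [H, 1 ⊗ X] = 0, then X = 0. -/
open Matrix BigOperators

/-- The single-site annihilation operator `a = |0⟩⟨1|` on `ℂ²`. -/
noncomputable def aSite : Matrix (Fin 2) (Fin 2) ℂ := Matrix.single 0 1 1

/-- `a_j`: the operator on `(ℂ²)^{⊗ℓ}` acting as `a` on site `j` and identity elsewhere. -/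
noncomputable def aOp (ℓ : ℕ) (j : Fin ℓ) :
    Matrix (Fin ℓ → Fin 2) (Fin ℓ → Fin 2) ℂ :=
  fun s t => (if ∀ k, k ≠ j → s k = t k then 1 else 0) * aSite (s j) (t j)

/-- The XX chain Hamiltonian `H = Σ_{j=1}^{ℓ−1} (a_j† a_{j+1} + a_{j+1}† a_j)`
on a chain of `ℓ = m+2` sites. -/
noncomputable def xxHam (m : ℕ) :
    Matrix (Fin (m + 2) → Fin 2) (Fin (m + 2) → Fin 2) ℂ :=
  ∑ j : Fin (m + 1),
    ((aOp (m + 2) j.castSucc)ᴴ * aOp (m + 2) j.succ +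
      (aOp (m + 2) j.succ)ᴴ * aOp (m + 2) j.castSucc)

/-- `1 ⊗ X`: the operator acting as the identity on site `1` and as `X` on sites `2,…,ℓ`. -/
noncomputable def tailEmbed (m : ℕ)
    (X : Matrix (Fin (m + 1) → Fin 2) (Fin (m + 1) → Fin 2) ℂ) :
    Matrix (Fin (m + 2) → Fin 2) (Fin (m + 2) → Fin 2) ℂ :=
  fun s t => (if s 0 = t 0 then 1 else 0) * X (fun k => s k.succ) (fun k => t k.succ)

/-!
Split off the first site of the tail: `H = a† ⊗ a₁ + a ⊗ a₁† + 1 ⊗ H'`, where `a₁` annihilates on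
site 2 and `H'` is the XX chain on sites 2, …, ℓ. The blocks of `[H, 1 ⊗ X] = 0` with respect to
site 1 give `[a₁, X] = [a₁†, X] = [H', X] = 0`. As `a₁` and `a₁†` generate all operators on site 2,
`X = 1 ⊗ X'` with `Tr X' = Tr X / 2 = 0` and `[H', 1 ⊗ X'] = 0`, so induction on the length ends at
a traceless `1 × 1` matrix.
-/

namespace XXChain

open scoped Kronecker

variable {n : ℕ}

noncomputable def kronHead {n : ℕ} (A : Matrix (Fin 2) (Fin 2) ℂ)
    (B : Matrix (Fin n → Fin 2) (Fin n → Fin 2) ℂ) :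
    Matrix (Fin (n + 1) → Fin 2) (Fin (n + 1) → Fin 2) ℂ :=
  (A ⊗ₖ B).submatrix (Fin.consEquiv fun _ => Fin 2).symm (Fin.consEquiv fun _ => Fin 2).symm

theorem kronHead_apply (A : Matrix (Fin 2) (Fin 2) ℂ)
    (B : Matrix (Fin n → Fin 2) (Fin n → Fin 2) ℂ) (s t : Fin (n + 1) → Fin 2) :
    kronHead A B s t = A (s 0) (t 0) * B (Fin.tail s) (Fin.tail t) := rfl

@[simp]
theorem kronHead_apply_cons (A : Matrix (Fin 2) (Fin 2) ℂ)
    (B : Matrix (Fin n → Fin 2) (Fin n → Fin 2) ℂ) (a b : Fin 2) (p q : Fin n → Fin 2) :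
    kronHead A B (Fin.cons a p) (Fin.cons b q) = A a b * B p q := rfl

theorem kronHead_mul_kronHead (A C : Matrix (Fin 2) (Fin 2) ℂ)
    (B D : Matrix (Fin n → Fin 2) (Fin n → Fin 2) ℂ) :
    kronHead A B * kronHead C D = kronHead (A * C) (B * D) := by
  rw [kronHead, kronHead, kronHead, submatrix_mul_equiv, mul_kronecker_mul]

theorem conjTranspose_kronHead (A : Matrix (Fin 2) (Fin 2) ℂ)
    (B : Matrix (Fin n → Fin 2) (Fin n → Fin 2) ℂ) :
    (kronHead A B)ᴴ = kronHead Aᴴ Bᴴ := by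
  rw [kronHead, kronHead, conjTranspose_submatrix, conjTranspose_kronecker]

theorem kronHead_add (A : Matrix (Fin 2) (Fin 2) ℂ)
    (B C : Matrix (Fin n → Fin 2) (Fin n → Fin 2) ℂ) :
    kronHead A (B + C) = kronHead A B + kronHead A C := by
  ext s t; simp [kronHead_apply, mul_add]

theorem kronHead_sub (A : Matrix (Fin 2) (Fin 2) ℂ)
    (B C : Matrix (Fin n → Fin 2) (Fin n → Fin 2) ℂ) :
    kronHead A (B - C) = kronHead A B - kronHead A C := by
  ext s t; simp [kronHead_apply, mul_sub]

theorem kronHead_sum {ι : Type*} (s : Finset ι) (A : Matrix (Fin 2) (Fin 2) ℂ)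
    (B : ι → Matrix (Fin n → Fin 2) (Fin n → Fin 2) ℂ) :
    kronHead A (∑ i ∈ s, B i) = ∑ i ∈ s, kronHead A (B i) := by
  ext u v; simp [kronHead_apply, Matrix.sum_apply, Finset.mul_sum]

@[simp]
theorem kronHead_zero (A : Matrix (Fin 2) (Fin 2) ℂ) :
    kronHead A (0 : Matrix (Fin n → Fin 2) (Fin n → Fin 2) ℂ) = 0 := by
  ext s t; simp [kronHead_apply]

theorem trace_kronHead (A : Matrix (Fin 2) (Fin 2) ℂ)
    (B : Matrix (Fin n → Fin 2) (Fin n → Fin 2) ℂ) :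
    (kronHead A B).trace = A.trace * B.trace := by
  rw [← trace_kronecker, kronHead, trace, trace]
  exact Equiv.sum_comp (Fin.consEquiv fun _ => Fin 2).symm fun i => (A ⊗ₖ B) i i

theorem kronHead_mul_apply_cons (A : Matrix (Fin 2) (Fin 2) ℂ)
    (X : Matrix (Fin (n + 1) → Fin 2) (Fin (n + 1) → Fin 2) ℂ) (a : Fin 2) (p : Fin n → Fin 2)
    (t : Fin (n + 1) → Fin 2) :
    (kronHead A (1 : Matrix (Fin n → Fin 2) (Fin n → Fin 2) ℂ) * X) (Fin.cons a p) t =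
      ∑ c, A a c * X (Fin.cons c p) t := by
  rw [mul_apply, ← (Fin.consEquiv fun _ => Fin 2).sum_comp, Fintype.sum_prod_type]
  simp [Fin.consEquiv, one_apply]

theorem mul_kronHead_apply_cons (A : Matrix (Fin 2) (Fin 2) ℂ)
    (X : Matrix (Fin (n + 1) → Fin 2) (Fin (n + 1) → Fin 2) ℂ) (s : Fin (n + 1) → Fin 2)
    (b : Fin 2) (q : Fin n → Fin 2) :
    (X * kronHead A (1 : Matrix (Fin n → Fin 2) (Fin n → Fin 2) ℂ)) s (Fin.cons b q) =
      ∑ c, X s (Fin.cons c q) * A c b := by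
  rw [mul_apply, ← (Fin.consEquiv fun _ => Fin 2).sum_comp, Fintype.sum_prod_type]
  simp [Fin.consEquiv, one_apply]

theorem tailEmbed_eq_kronHead (m : ℕ) (X : Matrix (Fin (m + 1) → Fin 2) (Fin (m + 1) → Fin 2) ℂ) :
    tailEmbed m X = kronHead 1 X := by
  ext s t
  simp only [tailEmbed, kronHead_apply, one_apply, ite_mul, one_mul, zero_mul]
  rfl

theorem aOp_zero_eq_kronHead : aOp (n + 1) 0 = kronHead aSite 1 := by
  ext s t
  have : (∀ k : Fin (n + 1), k ≠ 0 → s k = t k) ↔ Fin.tail s = Fin.tail t := by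
    simp [Fin.forall_fin_succ, funext_iff, Fin.tail]
  simp [aOp, kronHead_apply, one_apply, this, mul_comm]

theorem aOp_succ_eq_kronHead (j : Fin n) : aOp (n + 1) j.succ = kronHead 1 (aOp n j) := by
  ext s t
  have : (∀ k : Fin (n + 1), k ≠ j.succ → s k = t k) ↔
      s 0 = t 0 ∧ ∀ k, k ≠ j → Fin.tail s k = Fin.tail t k := by
    simp [Fin.forall_fin_succ, Fin.tail, (Fin.succ_ne_zero j).symm]
  simp only [aOp, kronHead_apply, one_apply]
  rw [if_congr this rfl rfl, ite_and]
  split_ifs <;> simp [Fin.tail]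

noncomputable def xxChain (n : ℕ) : Matrix (Fin (n + 1) → Fin 2) (Fin (n + 1) → Fin 2) ℂ :=
  ∑ j : Fin n, ((aOp (n + 1) j.castSucc)ᴴ * aOp (n + 1) j.succ +
      (aOp (n + 1) j.succ)ᴴ * aOp (n + 1) j.castSucc)

theorem xxHam_eq_xxChain (m : ℕ) : xxHam m = xxChain (m + 1) := rfl

theorem xxChain_succ : xxChain (n + 1) = kronHead aSiteᴴ (aOp (n + 1) 0) +
    kronHead aSite (aOp (n + 1) 0)ᴴ + kronHead 1 (xxChain n) := by
  rw [xxChain, Fin.sum_univ_succ, xxChain, kronHead_sum]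
  simp only [Fin.castSucc_zero, ← Fin.succ_castSucc, aOp_zero_eq_kronHead, aOp_succ_eq_kronHead,
    conjTranspose_kronHead, kronHead_mul_kronHead, conjTranspose_one, mul_one, one_mul,
    kronHead_add]

theorem lie_xxChain_succ_kronHead_one (X : Matrix (Fin (n + 1) → Fin 2) (Fin (n + 1) → Fin 2) ℂ) :
    ⁅xxChain (n + 1), kronHead 1 X⁆ = kronHead aSiteᴴ ⁅aOp (n + 1) 0, X⁆ +
      kronHead aSite ⁅(aOp (n + 1) 0)ᴴ, X⁆ + kronHead 1 ⁅xxChain n, X⁆ := by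
  rw [xxChain_succ]
  simp only [Ring.lie_def, add_mul, mul_add, kronHead_mul_kronHead, mul_one, one_mul, kronHead_sub]
  abel

theorem commute_of_commute_xxChain_succ {X : Matrix (Fin (n + 1) → Fin 2) (Fin (n + 1) → Fin 2) ℂ}
    (h : Commute (xxChain (n + 1)) (kronHead 1 X)) :
    Commute (aOp (n + 1) 0) X ∧ Commute (aOp (n + 1) 0)ᴴ X ∧ Commute (xxChain n) X := by
  rw [commute_iff_lie_eq, lie_xxChain_succ_kronHead_one] at h
  -- the blocks (1,0), (0,1), (0,0) in the first site each isolate one commutator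
  have block (a b : Fin 2) (p q : Fin (n + 1) → Fin 2) := congr_fun₂ h (Fin.cons a p) (Fin.cons b q)
  simp only [Matrix.add_apply, kronHead_apply_cons, Matrix.zero_apply] at block
  refine ⟨?_, ?_, ?_⟩ <;> rw [commute_iff_lie_eq] <;> ext p q
  · simpa [aSite] using block 1 0 p q
  · simpa [aSite] using block 0 1 p q
  · simpa [aSite] using block 0 0 p q

theorem exists_eq_kronHead_one_of_commute
    {X : Matrix (Fin (n + 1) → Fin 2) (Fin (n + 1) → Fin 2) ℂ}
    (h : Commute (kronHead aSite 1) X) (h' : Commute (kronHead aSiteᴴ 1) X) :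
    ∃ X', X = kronHead 1 X' := by
  have lower (p q : Fin n → Fin 2) : X (Fin.cons 1 p) (Fin.cons 0 q) = 0 := by
    simpa [kronHead_mul_apply_cons, mul_kronHead_apply_cons, aSite] using
      congr_fun₂ h.eq (Fin.cons 0 p) (Fin.cons 0 q)
  have upper (p q : Fin n → Fin 2) : X (Fin.cons 0 p) (Fin.cons 1 q) = 0 := by
    simpa [kronHead_mul_apply_cons, mul_kronHead_apply_cons, aSite] using
      congr_fun₂ h'.eq (Fin.cons 1 p) (Fin.cons 1 q)
  have diag (p q : Fin n → Fin 2) :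
      X (Fin.cons 1 p) (Fin.cons 1 q) = X (Fin.cons 0 p) (Fin.cons 0 q) := by
    simpa [kronHead_mul_apply_cons, mul_kronHead_apply_cons, aSite] using
      congr_fun₂ h.eq (Fin.cons 0 p) (Fin.cons 1 q)
  refine ⟨Matrix.of fun p q => X (Fin.cons 0 p) (Fin.cons 0 q), ?_⟩
  ext s t
  obtain ⟨a, p, rfl⟩ : ∃ a p, s = Fin.cons a p := ⟨s 0, Fin.tail s, (Fin.cons_self_tail s).symm⟩
  obtain ⟨b, q, rfl⟩ : ∃ b q, t = Fin.cons b q := ⟨t 0, Fin.tail t, (Fin.cons_self_tail t).symm⟩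
  fin_cases a <;> fin_cases b <;> simp [lower, upper, diag]

theorem eq_zero_of_commute_xxChain_kronHead_one (X : Matrix (Fin n → Fin 2) (Fin n → Fin 2) ℂ)
    (htr : X.trace = 0) (h : Commute (xxChain n) (kronHead 1 X)) : X = 0 := by
  induction n with
  | zero =>
    ext s t
    rw [trace, Fintype.sum_subsingleton _ s] at htr
    rw [Subsingleton.elim t s, Matrix.zero_apply]
    exact htr
  | succ n ih =>
    obtain ⟨ha, ha', hH⟩ := commute_of_commute_xxChain_succ h
    rw [aOp_zero_eq_kronHead] at ha ha'
    rw [conjTranspose_kronHead, conjTranspose_one] at ha'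
    obtain ⟨X', rfl⟩ := exists_eq_kronHead_one_of_commute ha ha'
    rw [trace_kronHead, trace_one, Fintype.card_fin] at htr
    rw [ih X' (by simpa using htr) hH, kronHead_zero]

end XXChain

theorem stmt_9_general (m : ℕ)
    (X : Matrix (Fin (m + 1) → Fin 2) (Fin (m + 1) → Fin 2) ℂ)
    (htr : X.trace = 0)
    (hcomm : xxHam m * tailEmbed m X = tailEmbed m X * xxHam m) :
    X = 0 := by
  rw [XXChain.tailEmbed_eq_kronHead, XXChain.xxHam_eq_xxChain] at hcomm
  exact XXChain.eq_zero_of_commute_xxChain_kronHead_one X htr hcomm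

theorem stmt_9 (m : ℕ)
    (X : Matrix (Fin (m + 1) → Fin 2) (Fin (m + 1) → Fin 2) ℂ)
    (hherm : X.IsHermitian) (htr : X.trace = 0)
    (hcomm : xxHam m * tailEmbed m X = tailEmbed m X * xxHam m) :
    X = 0 :=
  stmt_9_general m X htr hcomm
end

section
/- Let H_A, H_B be finite-dimensional Hilbert spaces and H = H_A ⊗ 1 + 1 ⊗ H_B + H_AB with Tr_A(H_AB) = 0 and Tr_B(H_AB) = 0. Fix β > 0. If the Gibbs state ρ_β = e^{−βH}/Tr(e^{−βH}) has product form ρ_β = ρ_A ⊗ ρ_B for some density matrices ρ_A, ρ_B, then H_AB = 0. -/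
/-!
Writing `Z = Tr e^{-βH}`, the product form gives `e^{-βH} = (Z ρ_A) ⊗ ρ_B`. Both factors are
invertible because `e^{-βH}` is, so they have Hermitian logarithms, and `e^{-βH}` is also the
exponential of the local operator `log (Z ρ_A) ⊗ 1 + 1 ⊗ log ρ_B`. Since `exp` is injective on
Hermitian matrices, `-βH`, and with it `H_AB`, is local. An operator whose partial traces vanish is
Hilbert–Schmidt orthogonal to every local operator, so `Tr (H_ABᴴ H_AB) = 0` and `H_AB = 0`.
-/

open Matrix Kronecker BigOperators
open scoped ComplexOrder

namespace Matrix

section KroneckerAlgHom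

variable (R m n : Type*) [CommSemiring R] [Fintype m] [Fintype n] [DecidableEq m] [DecidableEq n]

def kroneckerOneAlgHom : Matrix m m R →ₐ[R] Matrix (m × n) (m × n) R where
  toFun X := X ⊗ₖ (1 : Matrix n n R)
  map_one' := one_kronecker_one
  map_mul' X Y := by rw [← mul_kronecker_mul, one_mul]
  map_zero' := zero_kronecker _
  map_add' X Y := add_kronecker _ _ _
  commutes' r := by simp [Algebra.algebraMap_eq_smul_one, smul_kronecker]

def oneKroneckerAlgHom : Matrix n n R →ₐ[R] Matrix (m × n) (m × n) R where
  toFun Y := (1 : Matrix m m R) ⊗ₖ Y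
  map_one' := one_kronecker_one
  map_mul' X Y := by rw [← mul_kronecker_mul, one_mul]
  map_zero' := kronecker_zero _
  map_add' X Y := kronecker_add _ _ _
  commutes' r := by simp [Algebra.algebraMap_eq_smul_one, kronecker_smul]

def localOperators : Submodule R (Matrix (m × n) (m × n) R) :=
  LinearMap.range (kroneckerOneAlgHom R m n).toLinearMap ⊔
    LinearMap.range (oneKroneckerAlgHom R m n).toLinearMap

variable {R m n}

theorem mem_localOperators {M : Matrix (m × n) (m × n) R} :
    M ∈ localOperators R m n ↔ ∃ X Y, X ⊗ₖ (1 : Matrix n n R) + (1 : Matrix m m R) ⊗ₖ Y = M := by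
  simp only [localOperators, Submodule.mem_sup, LinearMap.mem_range]
  constructor
  · rintro ⟨_, ⟨X, rfl⟩, _, ⟨Y, rfl⟩, rfl⟩
    exact ⟨X, Y, rfl⟩
  · rintro ⟨X, Y, rfl⟩
    exact ⟨_, ⟨X, rfl⟩, _, ⟨Y, rfl⟩, rfl⟩

theorem kronecker_one_add_one_kronecker_mem_localOperators (X : Matrix m m R)
    (Y : Matrix n n R) :
    X ⊗ₖ (1 : Matrix n n R) + (1 : Matrix m m R) ⊗ₖ Y ∈ localOperators R m n :=
  mem_localOperators.mpr ⟨X, Y, rfl⟩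

theorem commute_kronecker_one_one_kronecker (X : Matrix m m R) (Y : Matrix n n R) :
    Commute (X ⊗ₖ (1 : Matrix n n R)) ((1 : Matrix m m R) ⊗ₖ Y) := by
  simp only [Commute, SemiconjBy, ← mul_kronecker_mul, one_mul, mul_one]

end KroneckerAlgHom

variable {m n : Type*}

theorem IsHermitian.kronecker {R : Type*} [CommMagma R] [StarMul R] {X : Matrix m m R}
    {Y : Matrix n n R} (hX : X.IsHermitian) (hY : Y.IsHermitian) : (X ⊗ₖ Y).IsHermitian := by
  rw [IsHermitian, conjTranspose_kronecker, hX.eq, hY.eq]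

theorem IsHermitian.kronecker_one_add_one_kronecker {R : Type*} [CommSemiring R] [StarRing R]
    [DecidableEq m] [DecidableEq n] {X : Matrix m m R} {Y : Matrix n n R} (hX : X.IsHermitian)
    (hY : Y.IsHermitian) : (X ⊗ₖ (1 : Matrix n n R) + (1 : Matrix m m R) ⊗ₖ Y).IsHermitian :=
  (hX.kronecker isHermitian_one).add (isHermitian_one.kronecker hY)

theorem trace_kronecker_one_mul [Fintype m] [Fintype n] [DecidableEq n] (X : Matrix m m ℂ)
    (M : Matrix (m × n) (m × n) ℂ) :
    trace ((X ⊗ₖ (1 : Matrix n n ℂ)) * M) = trace (X * ptraceB M) := by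
  simp only [trace, diag_apply, mul_apply, kroneckerMap_apply, one_apply, mul_ite, mul_one,
    mul_zero, ite_mul, zero_mul, Fintype.sum_prod_type, Finset.sum_ite_eq, Finset.mem_univ,
    ↓reduceIte, ptraceB, Finset.mul_sum]
  exact Finset.sum_congr rfl fun _ _ => Finset.sum_comm

theorem trace_one_kronecker_mul [Fintype m] [Fintype n] [DecidableEq m] (Y : Matrix n n ℂ)
    (M : Matrix (m × n) (m × n) ℂ) :
    trace (((1 : Matrix m m ℂ) ⊗ₖ Y) * M) = trace (Y * ptraceA M) := by
  simp only [trace, diag_apply, mul_apply, kroneckerMap_apply, one_apply, ite_mul, one_mul,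
    zero_mul, Fintype.sum_prod_type, Finset.sum_ite_irrel, Finset.sum_const_zero,
    Finset.sum_ite_eq, Finset.mem_univ, ↓reduceIte, ptraceA, Finset.mul_sum]
  rw [Finset.sum_comm]
  exact Finset.sum_congr rfl fun _ _ => Finset.sum_comm

variable [Fintype m] [Fintype n] [DecidableEq m] [DecidableEq n]

theorem conjTranspose_mem_localOperators {R : Type*} [CommSemiring R] [StarRing R]
    {M : Matrix (m × n) (m × n) R} (hM : M ∈ localOperators R m n) :
    Mᴴ ∈ localOperators R m n := by
  obtain ⟨X, Y, rfl⟩ := mem_localOperators.mp hM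
  simpa [conjTranspose_kronecker] using kronecker_one_add_one_kronecker_mem_localOperators Xᴴ Yᴴ

theorem trace_mul_eq_zero_of_mem_localOperators {L M : Matrix (m × n) (m × n) ℂ}
    (hL : L ∈ localOperators ℂ m n) (hA : ptraceA M = 0) (hB : ptraceB M = 0) :
    trace (L * M) = 0 := by
  obtain ⟨X, Y, rfl⟩ := mem_localOperators.mp hL
  rw [add_mul, trace_add, trace_kronecker_one_mul, trace_one_kronecker_mul, hA, hB]
  simp

theorem eq_zero_of_mem_localOperators {M : Matrix (m × n) (m × n) ℂ}
    (hM : M ∈ localOperators ℂ m n) (hA : ptraceA M = 0) (hB : ptraceB M = 0) : M = 0 :=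
  trace_conjTranspose_mul_self_eq_zero_iff.mp
    (trace_mul_eq_zero_of_mem_localOperators (conjTranspose_mem_localOperators hM) hA hB)

theorem PosSemidef.posDef_of_posDef_kronecker [Nonempty m] [Nonempty n] {P : Matrix m m ℂ}
    {Q : Matrix n n ℂ} (hP : P.PosSemidef) (hQ : Q.PosSemidef) (h : (P ⊗ₖ Q).PosDef) :
    P.PosDef ∧ Q.PosDef := by
  have hdet : P.det ^ Fintype.card n * Q.det ^ Fintype.card m ≠ 0 :=
    det_kronecker P Q ▸ h.det_pos.ne'
  exact ⟨hP.posDef_iff_det_ne_zero.mpr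
      ((pow_ne_zero_iff Fintype.card_ne_zero).mp (left_ne_zero_of_mul hdet)),
    hQ.posDef_iff_det_ne_zero.mpr
      ((pow_ne_zero_iff Fintype.card_ne_zero).mp (right_ne_zero_of_mul hdet))⟩

section Exp

-- `NormedSpace.map_exp` needs some normed-algebra structure; `exp` itself does not depend on it.
attribute [local instance] Matrix.linftyOpNormedRing Matrix.linftyOpNormedAlgebra

theorem exp_kronecker_one (X : Matrix m m ℂ) :
    NormedSpace.exp (X ⊗ₖ (1 : Matrix n n ℂ)) = NormedSpace.exp X ⊗ₖ (1 : Matrix n n ℂ) :=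
  (NormedSpace.map_exp (kroneckerOneAlgHom ℂ m n)
    (LinearMap.continuous_of_finiteDimensional (kroneckerOneAlgHom ℂ m n).toLinearMap) X).symm

theorem exp_one_kronecker (Y : Matrix n n ℂ) :
    NormedSpace.exp ((1 : Matrix m m ℂ) ⊗ₖ Y) = (1 : Matrix m m ℂ) ⊗ₖ NormedSpace.exp Y :=
  (NormedSpace.map_exp (oneKroneckerAlgHom ℂ m n)
    (LinearMap.continuous_of_finiteDimensional (oneKroneckerAlgHom ℂ m n).toLinearMap) Y).symm

theorem exp_kronecker_one_add_one_kronecker (X : Matrix m m ℂ) (Y : Matrix n n ℂ) :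
    NormedSpace.exp (X ⊗ₖ (1 : Matrix n n ℂ) + (1 : Matrix m m ℂ) ⊗ₖ Y)
      = NormedSpace.exp X ⊗ₖ NormedSpace.exp Y := by
  rw [exp_add_of_commute _ _ (commute_kronecker_one_one_kronecker X Y), exp_kronecker_one,
    exp_one_kronecker, ← mul_kronecker_mul, mul_one, one_mul]

end Exp

section FunctionalCalculus

open scoped MatrixOrder Norms.L2Operator

theorem IsHermitian.posDef_exp {M : Matrix m m ℂ} (hM : M.IsHermitian) :
    (NormedSpace.exp M).PosDef :=
  ((isUnit_exp M).isStrictlyPositive hM.isSelfAdjoint.exp_nonneg).posDef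

theorem IsHermitian.eq_of_exp_eq_exp {M N : Matrix m m ℂ} (hM : M.IsHermitian)
    (hN : N.IsHermitian) (h : NormedSpace.exp M = NormedSpace.exp N) : M = N := by
  rw [← CFC.log_exp M hM.isSelfAdjoint, h, CFC.log_exp N hN.isSelfAdjoint]

theorem mem_localOperators_of_exp_eq_kronecker [Nonempty m] [Nonempty n]
    {M : Matrix (m × n) (m × n) ℂ} (hM : M.IsHermitian) {P : Matrix m m ℂ} {Q : Matrix n n ℂ}
    (hP : P.PosSemidef) (hQ : Q.PosSemidef) (h : NormedSpace.exp M = P ⊗ₖ Q) :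
    M ∈ localOperators ℂ m n := by
  obtain ⟨hP', hQ'⟩ := hP.posDef_of_posDef_kronecker hQ (h ▸ hM.posDef_exp)
  have hlog : M = CFC.log P ⊗ₖ (1 : Matrix n n ℂ) + (1 : Matrix m m ℂ) ⊗ₖ CFC.log Q := by
    refine hM.eq_of_exp_eq_exp
      (IsSelfAdjoint.log.isHermitian.kronecker_one_add_one_kronecker IsSelfAdjoint.log) ?_
    rw [exp_kronecker_one_add_one_kronecker, CFC.exp_log P hP'.isStrictlyPositive,
      CFC.exp_log Q hQ'.isStrictlyPositive, h]
  exact hlog ▸ kronecker_one_add_one_kronecker_mem_localOperators _ _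

end FunctionalCalculus

end Matrix

theorem stmt_16_general {A B : Type*} [Fintype A] [Fintype B] [DecidableEq A] [DecidableEq B]
    [Nonempty A] [Nonempty B]
    (HA : Matrix A A ℂ) (HB : Matrix B B ℂ) (HAB : Matrix (A × B) (A × B) ℂ)
    (hHA : HA.IsHermitian) (hHB : HB.IsHermitian) (hHAB : HAB.IsHermitian)
    (htrA : ptraceA HAB = 0) (htrB : ptraceB HAB = 0)
    (H : Matrix (A × B) (A × B) ℂ)
    (hH : H = HA ⊗ₖ (1 : Matrix B B ℂ) + (1 : Matrix A A ℂ) ⊗ₖ HB + HAB)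
    (β : ℝ) (hβ : 0 < β)
    (ρβ : Matrix (A × B) (A × B) ℂ)
    (hρβ : ρβ = ((NormedSpace.exp ((-(β : ℂ)) • H)).trace)⁻¹ •
      NormedSpace.exp ((-(β : ℂ)) • H))
    (ρA : Matrix A A ℂ) (ρB : Matrix B B ℂ)
    (hρA : ρA.PosSemidef)
    (hρB : ρB.PosSemidef)
    (hprod : ρβ = ρA ⊗ₖ ρB) :
    HAB = 0 := by
  have hH_herm : H.IsHermitian :=
    hH ▸ (hHA.kronecker_one_add_one_kronecker hHB).add hHAB
  have hβH : ((-(β : ℂ)) • H).IsHermitian :=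
    hH_herm.smul (by simp [IsSelfAdjoint, Complex.conj_ofReal])
  set E := NormedSpace.exp ((-(β : ℂ)) • H)
  have hZ : 0 < E.trace := hβH.posDef_exp.trace_pos
  have hE : E = (E.trace • ρA) ⊗ₖ ρB := by
    rw [smul_kronecker, ← hprod, hρβ, smul_smul, mul_inv_cancel₀ hZ.ne', one_smul]
  have hβH_loc := mem_localOperators_of_exp_eq_kronecker hβH (hρA.smul hZ.le) hρB hE
  have hHAB_eq : HAB = (-(β : ℂ))⁻¹ • ((-(β : ℂ)) • H) - (HA ⊗ₖ 1 + 1 ⊗ₖ HB) := by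
    rw [inv_smul_smul₀ (by simpa using hβ.ne'), hH]
    abel
  refine eq_zero_of_mem_localOperators ?_ htrA htrB
  exact hHAB_eq ▸ sub_mem (Submodule.smul_mem _ _ hβH_loc)
    (kronecker_one_add_one_kronecker_mem_localOperators HA HB)

theorem stmt_16 {A B : Type*} [Fintype A] [Fintype B] [DecidableEq A] [DecidableEq B]
    [Nonempty A] [Nonempty B]
    (HA : Matrix A A ℂ) (HB : Matrix B B ℂ) (HAB : Matrix (A × B) (A × B) ℂ)
    (hHA : HA.IsHermitian) (hHB : HB.IsHermitian) (hHAB : HAB.IsHermitian)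
    (htrA : ptraceA HAB = 0) (htrB : ptraceB HAB = 0)
    (H : Matrix (A × B) (A × B) ℂ)
    (hH : H = HA ⊗ₖ (1 : Matrix B B ℂ) + (1 : Matrix A A ℂ) ⊗ₖ HB + HAB)
    (β : ℝ) (hβ : 0 < β)
    (ρβ : Matrix (A × B) (A × B) ℂ)
    (hρβ : ρβ = ((NormedSpace.exp ((-(β : ℂ)) • H)).trace)⁻¹ •
      NormedSpace.exp ((-(β : ℂ)) • H))
    (ρA : Matrix A A ℂ) (ρB : Matrix B B ℂ)
    (hρA : ρA.PosSemidef) (hρAtr : ρA.trace = 1)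
    (hρB : ρB.PosSemidef) (hρBtr : ρB.trace = 1)
    (hprod : ρβ = ρA ⊗ₖ ρB) :
    HAB = 0 :=
  stmt_16_general HA HB HAB hHA hHB hHAB htrA htrB H hH β hβ ρβ hρβ ρA ρB hρA hρB hprod
end
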